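/- The Clifford–Hermite polynomial is given in closed form by CH_{2t}(H_k) = 2^{2t} t! L_t^{m/2+k−1}(|x|²) H_k, where L_t^α(x) = Σ_{i=0}^t [Γ(t+α+1)/(i!(t−i)!Γ(i+α+1))](−x)^i is the generalized Laguerre polynomial. -/

import Mathlib

open MvPolynomial

/-- The Laplacian `Δ = ∑ ∂_{x_i}²` on polynomials in `m` variables. -/
noncomputable def lap (m : ℕ) : Module.End ℝ (MvPolynomial (Fin m) ℝ) :=
  ∑ i : Fin m, ((pderiv i).toLinearMap * (pderiv i).toLinearMap)

/-- The Euler operator `𝔼 = ∑ x_i ∂_{x_i}`. -/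
noncomputable def euler (m : ℕ) : Module.End ℝ (MvPolynomial (Fin m) ℝ) :=
  ∑ i : Fin m, (LinearMap.mulLeft ℝ (X i) * (pderiv i).toLinearMap)

/-- Multiplication by `|x|² = ∑ x_i²`. -/
noncomputable def nsqOp (m : ℕ) : Module.End ℝ (MvPolynomial (Fin m) ℝ) :=
  LinearMap.mulLeft ℝ (∑ i : Fin m, X i ^ 2)


/-- The scalar operator `D_+² = −Δ − 4|x|² + 4𝔼 + 2m`. -/
noncomputable def Dplus2 (m : ℕ) : Module.End ℝ (MvPolynomial (Fin m) ℝ) :=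
  -lap m - (4 : ℝ) • nsqOp m + (4 : ℝ) • euler m + ((2 * m : ℕ) : ℝ) • 1

/-- The coefficient of `(-x)^i` in the generalized Laguerre polynomial
`L_t^α(x) = ∑_{i=0}^t Γ(t+α+1)/(i!(t−i)!Γ(i+α+1)) (−x)^i`. -/
noncomputable def laguerreCoeff (t : ℕ) (α : ℝ) (i : ℕ) : ℝ :=
  Real.Gamma (t + α + 1) / ((i.factorial : ℝ) * ((t - i).factorial : ℝ) * Real.Gamma (i + α + 1))

/-!
Put `α = m/2 + k - 1`. The commutator `[Δ, |x|²] = 4𝔼 + 2m` and Euler's identity `𝔼 H = k H`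
give `Δ(|x|^{2i+2} H) = 4(i+1)(i+α+1) |x|^{2i} H`, so `D_+²` maps `|x|^{2i} H` into the span of
`|x|^{2i-2} H, |x|^{2i} H, |x|^{2i+2} H`. Hence `(D_+²)^t H = ∑ᵢ c(t, i) |x|^{2i} H`, where
`c(t, ·)` obeys a three-term recurrence in `t`; the rescaled Laguerre coefficients
`4^t (-1)^i C(t, i) Γ(t+α+1) / Γ(i+α+1)` solve it, by Pascal's rule and `Γ(s+1) = s Γ(s)`.
-/

open Finset

/-- Natural subtraction makes `v (0 - 1) = v 0`; the hypothesis `hc` cancels that term. -/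
theorem map_sum_range_of_threeTerm {R M : Type*} [CommRing R] [AddCommGroup M] [Module R M]
    (D : Module.End R M) {v : ℕ → M} {a b c : ℕ → R}
    (hD : ∀ i, D (v i) = a i • v i + b i • v (i + 1) + c i • v (i - 1)) (hc : c 0 = 0)
    {p q : ℕ → R} {n : ℕ} (hp : ∀ i, n ≤ i → p i = 0)
    (hq₀ : q 0 = a 0 * p 0 + c 1 * p 1)
    (hq : ∀ i, q (i + 1) = b i * p i + a (i + 1) * p (i + 1) + c (i + 2) * p (i + 2)) :
    D (∑ i ∈ range n, p i • v i) = ∑ i ∈ range (n + 1), q i • v i := by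
  have hdiag : ∑ i ∈ range n, (a i * p i) • v i
      = ∑ i ∈ range n, (a (i + 1) * p (i + 1)) • v (i + 1) + (a 0 * p 0) • v 0 := by
    rw [← sum_range_succ' (fun i => (a i * p i) • v i), sum_range_succ, hp n le_rfl]
    simp
  have hlower : ∑ i ∈ range n, (c i * p i) • v (i - 1)
      = ∑ i ∈ range n, (c (i + 2) * p (i + 2)) • v (i + 1) + (c 1 * p 1) • v 0 := by
    have hpad : ∑ i ∈ range n, (c i * p i) • v (i - 1)
        = ∑ i ∈ range (n + 2), (c i * p i) • v (i - 1) := by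
      simp [sum_range_succ, hp n le_rfl, hp (n + 1) n.le_succ]
    rw [hpad, sum_range_succ', sum_range_succ', hc]
    simp
  simp only [map_sum, map_smul, hD, smul_add, smul_smul, sum_add_distrib, mul_comm (p _)]
  rw [sum_range_succ', hq₀, hdiag, hlower]
  simp only [hq, add_smul, sum_add_distrib]
  abel

noncomputable def sqNorm (m : ℕ) : MvPolynomial (Fin m) ℝ :=
  ∑ j : Fin m, X j ^ 2

section Operators

variable {m : ℕ}

lemma lap_apply (P : MvPolynomial (Fin m) ℝ) :
    lap m P = ∑ i : Fin m, pderiv i (pderiv i P) := by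
  simp [lap, LinearMap.sum_apply, Module.End.mul_apply]

lemma euler_apply (P : MvPolynomial (Fin m) ℝ) :
    euler m P = ∑ i : Fin m, X i * pderiv i P := by
  simp [euler, LinearMap.sum_apply, Module.End.mul_apply]

lemma Dplus2_apply (P : MvPolynomial (Fin m) ℝ) :
    Dplus2 m P = -lap m P - (4 : ℝ) • (sqNorm m * P) + (4 : ℝ) • euler m P
      + (2 * m : ℝ) • P := by
  simp [Dplus2, nsqOp, sqNorm]

lemma euler_of_isHomogeneous {k : ℕ} {P : MvPolynomial (Fin m) ℝ} (hP : P.IsHomogeneous k) :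
    euler m P = (k : ℝ) • P := by
  rw [euler_apply, hP.sum_X_mul_pderiv, Nat.cast_smul_eq_nsmul]

lemma isHomogeneous_sqNorm : (sqNorm m).IsHomogeneous 2 :=
  IsHomogeneous.sum _ _ _ fun j _ => by simpa using (isHomogeneous_X ℝ j).pow 2

lemma pderiv_sqNorm (i : Fin m) : pderiv i (sqNorm m) = 2 * X i := by
  rw [sqNorm, map_sum, Finset.sum_eq_single i]
  · simp
  · intro j _ hj
    simp [pderiv_X_of_ne hj]
  · simp

/-- The commutator `[Δ, |x|²] = 4𝔼 + 2m`. -/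
lemma lap_sqNorm_mul (P : MvPolynomial (Fin m) ℝ) :
    lap m (sqNorm m * P) = (2 * m : ℝ) • P + (4 : ℝ) • euler m P + sqNorm m * lap m P := by
  have hpderiv (i : Fin m) : pderiv i (pderiv i (sqNorm m * P))
      = 2 * P + 4 * (X i * pderiv i P) + sqNorm m * pderiv i (pderiv i P) := by
    have h2 : pderiv i (2 : MvPolynomial (Fin m) ℝ) = 0 := by
      exact_mod_cast (pderiv i).map_natCast 2
    simp only [pderiv_mul, pderiv_sqNorm, pderiv_X_self, map_add, h2]
    ring
  simp only [lap_apply, euler_apply, hpderiv, sum_add_distrib, sum_const, card_univ,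
    Fintype.card_fin, ← mul_sum, smul_eq_C_mul, nsmul_eq_mul]
  simp only [map_mul, map_ofNat, map_natCast]
  ring

end Operators

section Harmonic

variable {m k : ℕ} {H : MvPolynomial (Fin m) ℝ}

lemma isHomogeneous_sqNorm_pow_mul (hH : H.IsHomogeneous k) (i : ℕ) :
    (sqNorm m ^ i * H).IsHomogeneous (2 * i + k) :=
  (isHomogeneous_sqNorm.pow i).mul hH

variable (hH : H.IsHomogeneous k) (hharm : lap m H = 0)
include hH hharm

lemma lap_sqNorm_pow_succ_mul (i : ℕ) :
    lap m (sqNorm m ^ (i + 1) * H)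
      = (4 * (i + 1) * (i + 1 + ((m : ℝ) / 2 + k - 1))) • (sqNorm m ^ i * H) := by
  induction i with
  | zero =>
    rw [pow_one, lap_sqNorm_mul, hharm, euler_of_isHomogeneous hH, mul_zero, add_zero,
      smul_smul, ← add_smul, pow_zero, one_mul]
    congr 1
    push_cast
    ring
  | succ n ih =>
    rw [pow_succ', mul_assoc, lap_sqNorm_mul, ih,
      euler_of_isHomogeneous (isHomogeneous_sqNorm_pow_mul hH (n + 1)), mul_smul_comm,
      ← mul_assoc, ← pow_succ', smul_smul, ← add_smul, ← add_smul]
    congr 1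
    push_cast
    ring

lemma Dplus2_sqNorm_pow_mul (i : ℕ) :
    Dplus2 m (sqNorm m ^ i * H)
      = (8 * i + 4 * ((m : ℝ) / 2 + k - 1) + 4) • (sqNorm m ^ i * H)
        + (-4 : ℝ) • (sqNorm m ^ (i + 1) * H)
        + (-4 * i * (i + ((m : ℝ) / 2 + k - 1))) • (sqNorm m ^ (i - 1) * H) := by
  rw [Dplus2_apply, euler_of_isHomogeneous (isHomogeneous_sqNorm_pow_mul hH i), ← mul_assoc,
    ← pow_succ']
  cases i with
  | zero =>
    rw [pow_zero, one_mul, hharm]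
    push_cast
    module
  | succ n =>
    rw [lap_sqNorm_pow_succ_mul hH hharm n, Nat.add_sub_cancel]
    push_cast
    module

end Harmonic

lemma succ_mul_cast_choose_succ (t j : ℕ) :
    ((j : ℝ) + 1) * t.choose (j + 1) = ((t : ℝ) - j) * t.choose j := by
  have h : (t + 1) * t.choose j = (t.choose j + t.choose (j + 1)) * (j + 1) := by
    rw [← Nat.choose_succ_succ, ← Nat.add_one_mul_choose_eq]
  have h' := congrArg (Nat.cast (R := ℝ)) h
  push_cast at h'
  linear_combination -h'

section Coefficients

variable {α : ℝ}

lemma nat_add_add_one_pos (hα : -1 < α) (j : ℕ) : 0 < (j : ℝ) + α + 1 := by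
  linarith [j.cast_nonneg (α := ℝ)]

lemma Gamma_nat_add_pos (hα : -1 < α) (j : ℕ) : 0 < Real.Gamma (j + α + 1) :=
  Real.Gamma_pos_of_pos (nat_add_add_one_pos hα j)

lemma Gamma_nat_succ_add (hα : -1 < α) (j : ℕ) :
    Real.Gamma (j + 1 + α + 1) = (j + α + 1) * Real.Gamma (j + α + 1) := by
  rw [← Real.Gamma_add_one (nat_add_add_one_pos hα j).ne']
  ring_nf

/-- Uses `choose`, avoiding the truncated subtraction `t - i` of `laguerreCoeff`. -/
noncomputable def cliffordHermiteCoeff (α : ℝ) (t i : ℕ) : ℝ :=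
  4 ^ t * (-1) ^ i * t.choose i * (Real.Gamma (t + α + 1) / Real.Gamma (i + α + 1))

lemma cliffordHermiteCoeff_of_lt {t i : ℕ} (h : t < i) : cliffordHermiteCoeff α t i = 0 := by
  simp [cliffordHermiteCoeff, Nat.choose_eq_zero_of_lt h]

lemma cliffordHermiteCoeff_zero_zero (hα : -1 < α) : cliffordHermiteCoeff α 0 0 = 1 := by
  simpa [cliffordHermiteCoeff] using (Gamma_nat_add_pos hα 0).ne'

lemma cliffordHermiteCoeff_succ_zero (hα : -1 < α) (t : ℕ) :
    cliffordHermiteCoeff α (t + 1) 0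
      = (4 * α + 4) * cliffordHermiteCoeff α t 0 - 4 * (α + 1) * cliffordHermiteCoeff α t 1 := by
  have hα₁ : α + 1 ≠ 0 := by linarith
  have hG₀ : Real.Gamma (α + 1) ≠ 0 := by simpa using (Gamma_nat_add_pos hα 0).ne'
  have hG₁ : Real.Gamma (1 + α + 1) = (α + 1) * Real.Gamma (α + 1) := by
    simpa using Gamma_nat_succ_add hα 0
  simp only [cliffordHermiteCoeff, Nat.choose_zero_right, Nat.choose_one_right, pow_zero,
    pow_one]
  push_cast
  rw [Gamma_nat_succ_add hα, hG₁, zero_add]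
  field_simp
  ring

lemma cliffordHermiteCoeff_succ_succ (hα : -1 < α) (t i : ℕ) :
    cliffordHermiteCoeff α (t + 1) (i + 1)
      = -4 * cliffordHermiteCoeff α t i
        + (8 * (i + 1) + 4 * α + 4) * cliffordHermiteCoeff α t (i + 1)
        - 4 * (i + 2) * (i + 2 + α) * cliffordHermiteCoeff α t (i + 2) := by
  have h₁ := succ_mul_cast_choose_succ t i
  have h₂ := succ_mul_cast_choose_succ t (i + 1)
  have hi₁ := (nat_add_add_one_pos hα i).ne'
  have hi₂ := (nat_add_add_one_pos hα (i + 1)).ne'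
  have hGi := (Gamma_nat_add_pos hα i).ne'
  have hG₂ : Real.Gamma (i + 2 + α + 1) = (i + 1 + α + 1) * Real.Gamma (i + 1 + α + 1) := by
    rw [show (i : ℝ) + 2 + α + 1 = (i + 1 : ℕ) + 1 + α + 1 by push_cast; ring,
      Gamma_nat_succ_add hα]
    push_cast
    ring
  simp only [cliffordHermiteCoeff, Nat.choose_succ_succ']
  push_cast at h₂ hi₂ ⊢
  rw [hG₂, Gamma_nat_succ_add hα, Gamma_nat_succ_add hα]
  field_simp
  linear_combination (4 * 4 ^ t * (-1) ^ i * Real.Gamma (t + α + 1) * (i + 2 + α)) * (h₁ + h₂)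

lemma cliffordHermiteCoeff_eq_laguerreCoeff (hα : -1 < α) {t i : ℕ} (h : i ≤ t) :
    cliffordHermiteCoeff α t i
      = (2 : ℝ) ^ (2 * t) * t.factorial * (laguerreCoeff t α i * (-1) ^ i) := by
  have hGi := (Gamma_nat_add_pos hα i).ne'
  rw [cliffordHermiteCoeff, laguerreCoeff, Nat.cast_choose ℝ h, pow_mul]
  field_simp
  ring

end Coefficients

lemma Dplus2_pow_apply {m k : ℕ} (hα : -1 < (m : ℝ) / 2 + k - 1) {H : MvPolynomial (Fin m) ℝ}
    (hH : H.IsHomogeneous k) (hharm : lap m H = 0) (t : ℕ) :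
    (Dplus2 m ^ t) H = ∑ i ∈ range (t + 1),
      cliffordHermiteCoeff ((m : ℝ) / 2 + k - 1) t i • (sqNorm m ^ i * H) := by
  induction t with
  | zero => simp [cliffordHermiteCoeff_zero_zero hα]
  | succ t ih =>
    rw [pow_succ', Module.End.mul_apply, ih]
    refine map_sum_range_of_threeTerm _ (Dplus2_sqNorm_pow_mul hH hharm) (by simp)
      (fun i hi => cliffordHermiteCoeff_of_lt (by omega)) ?_ fun i => ?_
    · rw [cliffordHermiteCoeff_succ_zero hα]
      push_cast
      ring
    · rw [cliffordHermiteCoeff_succ_succ hα]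
      push_cast
      ring

theorem cliffordHermite_laguerre (m k t : ℕ) (hm : 1 ≤ m) (H : MvPolynomial (Fin m) ℝ)
    (hH : H.IsHomogeneous k) (hharm : lap m H = 0) :
    (Dplus2 m ^ t) H =
      ((2 : ℝ) ^ (2 * t) * (t.factorial : ℝ)) •
        ∑ i ∈ Finset.range (t + 1),
          (laguerreCoeff t ((m : ℝ) / 2 + k - 1) i * (-1) ^ i) •
            ((∑ j : Fin m, X j ^ 2) ^ i * H) := by
  have hα : -1 < (m : ℝ) / 2 + k - 1 := by
    have : (1 : ℝ) ≤ m := by exact_mod_cast hm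
    linarith [k.cast_nonneg (α := ℝ)]
  rw [Dplus2_pow_apply hα hH hharm, smul_sum]
  refine sum_congr rfl fun i hi => ?_
  rw [smul_smul, cliffordHermiteCoeff_eq_laguerreCoeff hα (Nat.lt_succ_iff.mp (mem_range.mp hi)),
    sqNorm]
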